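/- arXiv:1003.4839 — 2 statements merged into one kernel-verified Lean document; each statement's English description precedes it below -/
import Mathlib

section
/- Let ρ: [0,∞) → [0,∞) be a log-concave function and suppose ν(dr) = r^{n-1} ρ(r) 1_{[0,∞)}(r) dr is a probability measure on [0,∞). Then the variance of the identity function r under ν satisfies Var_ν(r) ≤ E_ν(r²)/n. -/
/-!
Write `g` for the extension of `ρ` by zero and `M k = ∫ r ^ k * g r`. The moments of `ν` are
`M (n - 1 + k)` and `M (n - 1) = 1`, so the claim is `(n - 1) M (n - 1) M (n + 1) ≤ n M n ^ 2`.
Twice the difference of the two sides is the integral of `momentKernel (n - 1) r s * g r * g s`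
over the plane. In the coordinates `r = m - t`, `s = m + t` the kernel becomes
`2 (m² - t²)^(n-1) (m² - (2n - 1) t²)`: on `|t| ≤ m` it has nonnegative integral and is
nonnegative exactly for `|t| ≤ t₀`. Log-concavity makes `t ↦ g (m - t) * g (m + t)` even and
nonincreasing in `|t|`, so this weight only favours the positive part of the kernel.
-/

open MeasureTheory Set

/-- `ρ` is log-concave on `[0,∞)`. -/
def LogConcaveOnIci (ρ : ℝ → ℝ) : Prop :=
  ∀ ⦃x : ℝ⦄, x ∈ Ici (0:ℝ) → ∀ ⦃y : ℝ⦄, y ∈ Ici (0:ℝ) →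
    ∀ ⦃a b : ℝ⦄, 0 ≤ a → 0 ≤ b → a + b = 1 →
      Real.rpow (ρ x) a * Real.rpow (ρ y) b ≤ ρ (a * x + b * y)

open Real

namespace LogConcaveOnIci

variable {ρ : ℝ → ℝ}

theorem quasiconcaveOn (hρ : ∀ r, 0 ≤ ρ r) (hlc : LogConcaveOnIci ρ) :
    QuasiconcaveOn ℝ (Ici 0) ρ := by
  rintro c x ⟨hx, hcx⟩ y ⟨hy, hcy⟩ a b ha hb hab
  refine ⟨convex_Ici 0 hx hy ha hb hab, ?_⟩
  rcases le_or_gt c 0 with hc | hc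
  · exact hc.trans (hρ _)
  calc c = c ^ a * c ^ b := by rw [← rpow_add hc, hab, rpow_one]
    _ ≤ ρ x ^ a * ρ y ^ b := mul_le_mul (rpow_le_rpow hc.le hcx ha) (rpow_le_rpow hc.le hcy hb)
        (rpow_nonneg hc.le b) (rpow_nonneg (hρ x) a)
    _ ≤ ρ (a • x + b • y) := hlc hx hy ha hb hab

theorem mul_le_mul_of_add_eq_one (hρ : ∀ r, 0 ≤ ρ r) (hlc : LogConcaveOnIci ρ) {x y a b : ℝ}
    (hx : 0 ≤ x) (hy : 0 ≤ y) (ha : 0 ≤ a) (hb : 0 ≤ b) (hab : a + b = 1) :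
    ρ x * ρ y ≤ ρ (a * x + b * y) * ρ (b * x + a * y) := by
  have hsplit (u : ℝ) (hu : 0 ≤ u) : u = u ^ a * u ^ b := by
    rw [← rpow_add' hu (by simp [hab]), hab, rpow_one]
  calc ρ x * ρ y = (ρ x ^ a * ρ y ^ b) * (ρ x ^ b * ρ y ^ a) := by
        nth_rw 1 [hsplit _ (hρ x), hsplit _ (hρ y)]; ring
    _ ≤ ρ (a * x + b * y) * ρ (b * x + a * y) :=
        mul_le_mul (hlc hx hy ha hb hab) (hlc hx hy hb ha (by linarith))
          (mul_nonneg (rpow_nonneg (hρ x) b) (rpow_nonneg (hρ y) a)) (hρ _)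

theorem antitoneOn_indicator_mul (hρ : ∀ r, 0 ≤ ρ r) (hlc : LogConcaveOnIci ρ) (m : ℝ) :
    AntitoneOn (fun t => (Ici 0).indicator ρ (m - t) * (Ici 0).indicator ρ (m + t)) (Ici 0) := by
  intro t₁ (ht₁ : 0 ≤ t₁) t₂ (ht₂ : 0 ≤ t₂) h12
  have hnonneg (r : ℝ) : 0 ≤ (Ici 0).indicator ρ r := indicator_nonneg (fun r _ => hρ r) r
  rcases lt_or_ge m t₂ with hm | hm
  · simp only [indicator_of_notMem (show m - t₂ ∉ Ici 0 by simp; linarith), zero_mul]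
    exact mul_nonneg (hnonneg _) (hnonneg _)
  rcases ht₂.eq_or_lt with rfl | ht₂
  · rw [le_antisymm h12 ht₁]
  simp only [indicator_of_mem (show m - t₁ ∈ Ici 0 by simp; linarith),
    indicator_of_mem (show m + t₁ ∈ Ici 0 by simp; linarith),
    indicator_of_mem (show m - t₂ ∈ Ici 0 by simp; linarith),
    indicator_of_mem (show m + t₂ ∈ Ici 0 by simp; linarith)]
  have hsub : (t₂ + t₁) / (2 * t₂) * (m - t₂) + (t₂ - t₁) / (2 * t₂) * (m + t₂) = m - t₁ := by
    field_simp; ring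
  have hadd : (t₂ - t₁) / (2 * t₂) * (m - t₂) + (t₂ + t₁) / (2 * t₂) * (m + t₂) = m + t₁ := by
    field_simp; ring
  rw [← hsub, ← hadd]
  exact hlc.mul_le_mul_of_add_eq_one hρ (by linarith) (by linarith) (by positivity)
    (div_nonneg (by linarith) (by linarith)) (by field_simp; ring)

end LogConcaveOnIci

theorem QuasiconcaveOn.measurable_indicator {s : Set ℝ} {f : ℝ → ℝ} (hf : QuasiconcaveOn ℝ s f)
    (hs : MeasurableSet s) : Measurable (s.indicator f) := by
  refine measurable_of_Ici fun c => ?_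
  have hpre : s.indicator f ⁻¹' Ici c = {x ∈ s | c ≤ f x} ∪ (sᶜ ∩ {_x | c ≤ 0}) := by
    ext x
    by_cases hx : x ∈ s <;> simp [hx]
  rw [hpre]
  exact (hf c).ordConnected.measurableSet.union (hs.compl.inter (MeasurableSet.const _))

theorem integral_mul_nonneg_of_sub_mul_nonneg {α : Type*} [MeasurableSpace α] {μ : Measure α}
    {φ G : α → ℝ} {K : ℝ} (hK : 0 ≤ K) (hφ : Integrable φ μ) (hφ_nonneg : 0 ≤ ∫ x, φ x ∂μ)
    (hsign : ∀ x, 0 ≤ (G x - K) * φ x) : 0 ≤ ∫ x, φ x * G x ∂μ := by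
  by_cases hφG : Integrable (fun x => φ x * G x) μ
  · calc 0 ≤ K * ∫ x, φ x ∂μ := mul_nonneg hK hφ_nonneg
      _ = ∫ x, K * φ x ∂μ := (integral_const_mul K φ).symm
      _ ≤ ∫ x, φ x * G x ∂μ :=
          integral_mono (hφ.const_mul K) hφG fun x => by nlinarith [hsign x]
  · rw [integral_undef hφG]

theorem integral_nonneg_of_integral_sub_add_nonneg {F : ℝ × ℝ → ℝ} (hF : Integrable F)
    (h : ∀ m, 0 ≤ ∫ t, F (m - t, m + t)) : 0 ≤ ∫ z, F z := by
  have hshear : Integrable (fun z : ℝ × ℝ => F (z.1, z.2 - z.1)) (volume.prod volume) :=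
    ((measurePreserving_prod_sub volume volume).integrable_comp hF.aestronglyMeasurable).mpr hF
  calc (0 : ℝ) ≤ ∫ u, ∫ t, F (u / 2 - t, u / 2 + t) := integral_nonneg fun u => h (u / 2)
    _ = ∫ u, ∫ r, F (r, u - r) := by
        congr 1 with u
        rw [← integral_sub_left_eq_self (fun r => F (r, u - r)) volume (u / 2)]
        congr 1 with t
        ring_nf
    _ = ∫ r, ∫ s, F (r, s) := by
        rw [← integral_integral_swap hshear]
        congr 1 with r
        exact integral_sub_right_eq_self (fun s => F (r, s)) r
    _ = ∫ z, F z := (integral_prod F hF).symm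

/-- Integrated against `g r * g s`, this kernel gives `2 ((p + 1) M_{p+1}^2 - p M_p M_{p+2})`,
where `M_k = ∫ r ^ k * g r`. -/
def momentKernel (p : ℕ) (r s : ℝ) : ℝ :=
  2 * (p + 1) * (r * s) ^ (p + 1) - p * (r ^ p * s ^ (p + 2) + r ^ (p + 2) * s ^ p)

theorem momentKernel_sub_add (p : ℕ) (m t : ℝ) :
    momentKernel p (m - t) (m + t) = 2 * (m ^ 2 - t ^ 2) ^ p * (m ^ 2 - (2 * p + 1) * t ^ 2) := by
  rw [momentKernel, show m ^ 2 - t ^ 2 = (m - t) * (m + t) by ring, mul_pow, mul_pow]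
  ring

theorem intervalIntegral_momentKernel_sub_add_nonneg (p : ℕ) {m : ℝ} (hm : 0 ≤ m) :
    0 ≤ ∫ t in -m..m, momentKernel p (m - t) (m + t) := by
  simp_rw [momentKernel_sub_add]
  set φ : ℝ → ℝ := fun t => 2 * (m ^ 2 - t ^ 2) ^ p * (m ^ 2 - (2 * p + 1) * t ^ 2)
  set e : ℝ → ℝ := fun t => 4 * t ^ 2 * (m ^ 2 - t ^ 2) ^ p
  -- `∫ φ = ∫ e`, as `φ - e` is the derivative of a function vanishing at `± m`.
  have hderiv (x : ℝ) : HasDerivAt (fun t => 2 * t * (m ^ 2 - t ^ 2) ^ (p + 1)) (φ x - e x) x := by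
    have h := ((hasDerivAt_id' x).const_mul 2).fun_mul
      (((hasDerivAt_pow 2 x).const_sub (m ^ 2)).fun_pow (p + 1))
    refine h.congr_deriv ?_
    simp only [φ, e, Nat.add_sub_cancel]
    push_cast
    ring
  have hφ : Continuous φ := by fun_prop
  have he : Continuous e := by fun_prop
  have hdiff : ∫ t in -m..m, (φ t - e t) = 0 := by
    rw [intervalIntegral.integral_eq_sub_of_hasDerivAt (fun x _ => hderiv x)
      ((hφ.sub he).intervalIntegrable _ _)]
    ring
  have he_nonneg : 0 ≤ ∫ t in -m..m, e t := by
    refine intervalIntegral.integral_nonneg (by linarith) fun t ht => ?_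
    have : t ^ 2 ≤ m ^ 2 := sq_le_sq' ht.1 ht.2
    have : 0 ≤ m ^ 2 - t ^ 2 := by linarith
    positivity
  rw [intervalIntegral.integral_sub (hφ.intervalIntegrable _ _) (he.intervalIntegrable _ _)]
    at hdiff
  linarith

-- `t₀ = m / √(2p + 1)` is where the kernel changes sign on `[-m, m]`.
theorem sub_mul_momentKernel_sub_add_nonneg {G : ℝ → ℝ} (hG_even : ∀ t, G (-t) = G t)
    (hG : AntitoneOn G (Ici 0)) (p : ℕ) {m t : ℝ} (ht : t ∈ Icc (-m) m) :
    0 ≤ (G t - G (m / √(2 * p + 1))) * momentKernel p (m - t) (m + t) := by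
  set t₀ := m / √(2 * p + 1)
  have hm : 0 ≤ m := by linarith [ht.1, ht.2]
  have ht₀ : 0 ≤ t₀ := by positivity
  have hm_t₀ : m ^ 2 = (2 * p + 1) * t₀ ^ 2 := by
    rw [div_pow, sq_sqrt (by positivity)]; field_simp
  have hmt : 0 ≤ m ^ 2 - t ^ 2 := by nlinarith [ht.1, ht.2]
  have hG_abs : G t = G |t| := by rcases abs_choice t with h | h <;> simp [h, hG_even]
  have hmono : 0 ≤ (G |t| - G t₀) * (t₀ - |t|) := by
    rcases le_total |t| t₀ with h | h
    · exact mul_nonneg (by linarith [hG (abs_nonneg t) ht₀ h]) (by linarith)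
    · exact mul_nonneg_of_nonpos_of_nonpos (by linarith [hG ht₀ (abs_nonneg t) h]) (by linarith)
  have hkernel : momentKernel p (m - t) (m + t) =
      2 * (2 * p + 1) * ((m ^ 2 - t ^ 2) ^ p * (t₀ + |t|)) * (t₀ - |t|) := by
    rw [momentKernel_sub_add, hm_t₀, ← sq_abs t]
    ring
  rw [hkernel, hG_abs]
  have := mul_nonneg (mul_nonneg (by positivity : (0 : ℝ) ≤ 2 * (2 * p + 1))
    (mul_nonneg (pow_nonneg hmt p) (by positivity : 0 ≤ t₀ + |t|))) hmono
  linarith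

section Moments

variable {g : ℝ → ℝ}

theorem integral_momentKernel_sub_add_mul_nonneg (hg : ∀ r, 0 ≤ g r) (hg_neg : ∀ r < 0, g r = 0)
    (hanti : ∀ m, AntitoneOn (fun t => g (m - t) * g (m + t)) (Ici 0)) (p : ℕ) (m : ℝ) :
    0 ≤ ∫ t, momentKernel p (m - t) (m + t) * (g (m - t) * g (m + t)) := by
  set G : ℝ → ℝ := fun t => g (m - t) * g (m + t)
  set ψ := (Icc (-m) m).indicator fun t => momentKernel p (m - t) (m + t)
  have hG_even (t : ℝ) : G (-t) = G t := by
    simp only [G, sub_neg_eq_add, ← sub_eq_add_neg, mul_comm]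
  have hG_out (t : ℝ) (ht : t ∉ Icc (-m) m) : G t = 0 := by
    rw [mem_Icc, not_and_or, not_le, not_le] at ht
    rcases ht with ht | ht
    · simp [G, hg_neg (m + t) (by linarith)]
    · simp [G, hg_neg (m - t) (by linarith)]
  have hψ : Integrable ψ := by
    refine (integrable_indicator_iff measurableSet_Icc).mpr (Continuous.integrableOn_Icc ?_)
    simp only [momentKernel]
    fun_prop
  have hψ_nonneg : 0 ≤ ∫ t, ψ t := by
    rw [integral_indicator measurableSet_Icc]
    rcases lt_or_ge m 0 with hm | hm
    · simp [Icc_eq_empty (show ¬-m ≤ m by linarith)]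
    rw [integral_Icc_eq_integral_Ioc, ← intervalIntegral.integral_of_le (by linarith)]
    exact intervalIntegral_momentKernel_sub_add_nonneg p hm
  have hsign (t : ℝ) : 0 ≤ (G t - G (m / √(2 * p + 1))) * ψ t := by
    by_cases ht : t ∈ Icc (-m) m
    · rw [show ψ t = _ from indicator_of_mem ht _]
      exact sub_mul_momentKernel_sub_add_nonneg hG_even (hanti m) p ht
    · simp [ψ, ht]
  have hψG (t : ℝ) : momentKernel p (m - t) (m + t) * G t = ψ t * G t := by
    by_cases ht : t ∈ Icc (-m) m
    · simp [ψ, ht]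
    · simp [hG_out t ht]
  show 0 ≤ ∫ t, momentKernel p (m - t) (m + t) * G t
  simp only [hψG]
  exact integral_mul_nonneg_of_sub_mul_nonneg (mul_nonneg (hg _) (hg _)) hψ hψ_nonneg hsign

theorem momentKernel_mul_mul (p : ℕ) (r s : ℝ) :
    momentKernel p r s * (g r * g s) =
      2 * (p + 1) * ((r ^ (p + 1) * g r) * (s ^ (p + 1) * g s))
        - p * ((r ^ p * g r) * (s ^ (p + 2) * g s))
        - p * ((r ^ (p + 2) * g r) * (s ^ p * g s)) := by
  rw [momentKernel]; ring

theorem integrable_momentKernel_mul {p : ℕ} (h₀ : Integrable fun r => r ^ p * g r)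
    (h₁ : Integrable fun r => r ^ (p + 1) * g r) (h₂ : Integrable fun r => r ^ (p + 2) * g r) :
    Integrable fun z : ℝ × ℝ => momentKernel p z.1 z.2 * (g z.1 * g z.2) := by
  simp only [momentKernel_mul_mul]
  exact (((h₁.mul_prod h₁).const_mul _).sub ((h₀.mul_prod h₂).const_mul _)).sub
    ((h₂.mul_prod h₀).const_mul _)

theorem integral_momentKernel_mul {p : ℕ} (h₀ : Integrable fun r => r ^ p * g r)
    (h₁ : Integrable fun r => r ^ (p + 1) * g r) (h₂ : Integrable fun r => r ^ (p + 2) * g r) :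
    ∫ z : ℝ × ℝ, momentKernel p z.1 z.2 * (g z.1 * g z.2) =
      2 * ((p + 1) * (∫ r, r ^ (p + 1) * g r) ^ 2
        - p * ((∫ r, r ^ p * g r) * ∫ r, r ^ (p + 2) * g r)) := by
  simp only [momentKernel_mul_mul]
  have h₁₁ := (h₁.mul_prod h₁).const_mul (2 * (p + 1 : ℝ))
  have h₀₂ := (h₀.mul_prod h₂).const_mul (p : ℝ)
  have h₂₀ := (h₂.mul_prod h₀).const_mul (p : ℝ)
  rw [Measure.volume_eq_prod, integral_sub (by exact h₁₁.sub h₀₂) h₂₀, integral_sub h₁₁ h₀₂,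
    integral_const_mul, integral_const_mul, integral_const_mul,
    integral_prod_mul (fun r => r ^ (p + 1) * g r) (fun r => r ^ (p + 1) * g r),
    integral_prod_mul (fun r => r ^ p * g r) (fun r => r ^ (p + 2) * g r),
    integral_prod_mul (fun r => r ^ (p + 2) * g r) (fun r => r ^ p * g r)]
  ring

theorem moment_turan_inequality (hg : ∀ r, 0 ≤ g r) (hg_neg : ∀ r < 0, g r = 0)
    (hanti : ∀ m, AntitoneOn (fun t => g (m - t) * g (m + t)) (Ici 0)) {p : ℕ}
    (h₀ : Integrable fun r => r ^ p * g r) (h₁ : Integrable fun r => r ^ (p + 1) * g r)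
    (h₂ : Integrable fun r => r ^ (p + 2) * g r) :
    p * ((∫ r, r ^ p * g r) * ∫ r, r ^ (p + 2) * g r) ≤ (p + 1) * (∫ r, r ^ (p + 1) * g r) ^ 2 := by
  have h := integral_nonneg_of_integral_sub_add_nonneg (integrable_momentKernel_mul h₀ h₁ h₂)
    (integral_momentKernel_sub_add_mul_nonneg hg hg_neg hanti p)
  rw [integral_momentKernel_mul h₀ h₁ h₂] at h
  linarith

end Moments

section WithDensity

variable {α : Type*} [MeasurableSpace α] {μ : Measure α} {s : Set α} {w : α → ℝ}

theorem integral_restrict_withDensity_ofReal (hs : MeasurableSet s)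
    (hw : AEMeasurable w (μ.restrict s)) (hw_nonneg : ∀ x ∈ s, 0 ≤ w x) (f : α → ℝ) :
    ∫ x, f x ∂(μ.restrict s).withDensity (fun x => ENNReal.ofReal (w x)) =
      ∫ x, s.indicator w x * f x ∂μ := by
  rw [integral_withDensity_eq_integral_toReal_smul₀ hw.ennreal_ofReal
    (ae_of_all _ fun _ => ENNReal.ofReal_lt_top), ← integral_indicator hs]
  congr 1 with x
  by_cases hx : x ∈ s <;> simp [hx, hw_nonneg x]

theorem integrable_restrict_withDensity_ofReal_iff (hs : MeasurableSet s)
    (hw : AEMeasurable w (μ.restrict s)) (hw_nonneg : ∀ x ∈ s, 0 ≤ w x) {f : α → ℝ} :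
    Integrable f ((μ.restrict s).withDensity fun x => ENNReal.ofReal (w x)) ↔
      Integrable (fun x => s.indicator w x * f x) μ := by
  rw [integrable_withDensity_iff_integrable_smul₀' hw.ennreal_ofReal
    (ae_of_all _ fun _ => ENNReal.ofReal_lt_top)]
  refine (integrable_indicator_iff hs).symm.trans (integrable_congr (ae_of_all _ fun x => ?_))
  by_cases hx : x ∈ s <;> simp [hx, hw_nonneg x]

end WithDensity

section RadialMoments

variable {ρ : ℝ → ℝ}

theorem indicator_pow_mul_mul_pow (p q : ℕ) (r : ℝ) :
    (Ici 0).indicator (fun r => r ^ p * ρ r) r * r ^ q = r ^ (p + q) * (Ici 0).indicator ρ r := by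
  by_cases hr : r ∈ Ici (0 : ℝ) <;> simp [hr, pow_add]
  ring

theorem aemeasurable_pow_mul_restrict_Ici (hρ : Measurable ((Ici 0).indicator ρ)) (p : ℕ) :
    AEMeasurable (fun r => r ^ p * ρ r) (volume.restrict (Ici 0)) :=
  ((measurable_id.pow_const p).mul hρ).aemeasurable.congr
    ((ae_restrict_mem measurableSet_Ici).mono fun r hr => by simp [hr])

theorem integral_pow_withDensity_pow_mul (hρ_nonneg : ∀ r, 0 ≤ ρ r)
    (hρ : Measurable ((Ici 0).indicator ρ)) (p q : ℕ) :
    ∫ r, r ^ q ∂(volume.restrict (Ici 0)).withDensity (fun r => ENNReal.ofReal (r ^ p * ρ r)) =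
      ∫ r, r ^ (p + q) * (Ici 0).indicator ρ r := by
  simp only [integral_restrict_withDensity_ofReal measurableSet_Ici
    (aemeasurable_pow_mul_restrict_Ici hρ p)
    (fun r hr => mul_nonneg (pow_nonneg hr p) (hρ_nonneg r)),
    indicator_pow_mul_mul_pow]

theorem integrable_pow_withDensity_pow_mul_iff (hρ_nonneg : ∀ r, 0 ≤ ρ r)
    (hρ : Measurable ((Ici 0).indicator ρ)) (p q : ℕ) :
    Integrable (fun r => r ^ q)
        ((volume.restrict (Ici 0)).withDensity fun r => ENNReal.ofReal (r ^ p * ρ r)) ↔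
      Integrable fun r => r ^ (p + q) * (Ici 0).indicator ρ r := by
  simp only [integrable_restrict_withDensity_ofReal_iff measurableSet_Ici
    (aemeasurable_pow_mul_restrict_Ici hρ p)
    (fun r hr => mul_nonneg (pow_nonneg hr p) (hρ_nonneg r)),
    indicator_pow_mul_mul_pow]

end RadialMoments

theorem stmt0 (n : ℕ) (hn : 1 ≤ n) (ρ : ℝ → ℝ) (hρ : ∀ r, 0 ≤ ρ r)
    (hlc : LogConcaveOnIci ρ)
    (ν : Measure ℝ)
    (hν : ν = (volume.restrict (Ici (0:ℝ))).withDensity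
      (fun r => ENNReal.ofReal (r ^ (n - 1) * ρ r)))
    (hprob : IsProbabilityMeasure ν)
    (h1 : Integrable (fun r => r) ν)
    (h2 : Integrable (fun r => r ^ 2) ν) :
    (∫ r, r ^ 2 ∂ν) - (∫ r, r ∂ν) ^ 2 ≤ (∫ r, r ^ 2 ∂ν) / n := by
  obtain ⟨p, rfl⟩ : ∃ p, n = p + 1 := ⟨n - 1, by omega⟩
  rw [Nat.add_sub_cancel] at hν
  set g := (Ici (0 : ℝ)).indicator ρ
  have hmeas : Measurable g := (hlc.quasiconcaveOn hρ).measurable_indicator measurableSet_Ici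
  have hmoment (q : ℕ) : ∫ r, r ^ q ∂ν = ∫ r, r ^ (p + q) * g r := by
    rw [hν, integral_pow_withDensity_pow_mul hρ hmeas]
  have hintegrable (q : ℕ) (hq : Integrable (fun r => r ^ q) ν) :
      Integrable fun r => r ^ (p + q) * g r := by
    rwa [hν, integrable_pow_withDensity_pow_mul_iff hρ hmeas] at hq
  have key := moment_turan_inequality (g := g) (p := p) (indicator_nonneg fun r _ => hρ r)
    (fun r hr => indicator_of_notMem (not_le.mpr hr) ρ) (hlc.antitoneOn_indicator_mul hρ)
    (hintegrable 0 (by simp)) (hintegrable 1 (by simpa using h1)) (hintegrable 2 h2)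
  have hmass : ∫ r, r ^ p * g r = 1 := (hmoment 0).symm.trans (by simp)
  have hmean : ∫ r, r ∂ν = ∫ r, r ^ (p + 1) * g r := by simpa using hmoment 1
  rw [hmass, one_mul, ← hmean, ← hmoment 2] at key
  rw [le_div_iff₀ (by positivity)]
  push_cast
  linarith
end

section
/- Let ρ: [0,∞) → [0,∞) be log-concave and non-increasing with ∫₀^∞ n r^{n-1} ρ(r) dr = 1. Let R have law n r^{n-1} ρ(r) dr on [0,∞), let S have law -s^n ρ'(s) ds on [0,∞), and let T have density n t^{n-1} on [0,1], with S and T independent. Then the product S·T has the same distribution as R. -/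
/-!
Let `μ` be the measure `-ρ'(s) ds` on `[0, ∞)`, so that `S` has law `s ^ n μ(ds)`. Since
`s ^ n P(s T ≤ t) = ∫_{[0, min s t]} n r ^ (n - 1) dr`, Tonelli on the region `{r ≤ s}` shows
that `S T` has law `n r ^ (n - 1) μ([r, ∞)) dr`. For a monotone function the integral of the
derivative is bounded by the increment (no absolute continuity is needed), so
`μ([r, ∞)) ≤ ρ(r)` and the law of `S T` is dominated by the law of `R`. Both are probability
measures, hence they coincide.
-/

open MeasureTheory Set

def AntitoneOnIci (ρ : ℝ → ℝ) : Prop :=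
  ∀ ⦃x y : ℝ⦄, 0 ≤ x → x ≤ y → ρ y ≤ ρ x

open Filter

lemma AntitoneOn.deriv_nonpos_of_mem_nhds {f : ℝ → ℝ} {s : Set ℝ} {x : ℝ}
    (hf : AntitoneOn f s) (hs : s ∈ nhds x) : deriv f x ≤ 0 := by
  rw [← derivWithin_of_mem_nhds hs]
  exact hf.derivWithin_nonpos

lemma AntitoneOn.setLIntegral_Ioc_neg_deriv_le {f : ℝ → ℝ} {a b : ℝ} (hab : a ≤ b)
    (hf : AntitoneOn f (Icc a b)) :
    ∫⁻ x in Ioc a b, ENNReal.ofReal (-deriv f x) ≤ ENNReal.ofReal (f a - f b) := by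
  have hmono : MonotoneOn (-f) (uIcc a b) := by rw [uIcc_of_le hab]; exact hf.neg
  have hderiv : deriv (-f) = -deriv f := funext fun x => deriv.neg
  have hint : IntegrableOn (-deriv f) (Ioc a b) := by
    rw [← hderiv]
    exact (intervalIntegrable_iff_integrableOn_Ioc_of_le hab).mp hmono.intervalIntegrable_deriv
  have hnonneg : 0 ≤ᵐ[volume.restrict (Ioc a b)] -deriv f := by
    rw [← restrict_Ioo_eq_restrict_Ioc, EventuallyLE, ae_restrict_iff' measurableSet_Ioo]
    exact Eventually.of_forall fun x hx => neg_nonneg.mpr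
      ((hf.mono Ioo_subset_Icc_self).deriv_nonpos_of_mem_nhds (Ioo_mem_nhds hx.1 hx.2))
  have hfab : f b ≤ f a := hf (left_mem_Icc.2 hab) (right_mem_Icc.2 hab) hab
  have hle := hmono.intervalIntegral_deriv_mem_uIcc.2
  rw [hderiv, intervalIntegral.integral_of_le hab, Pi.neg_apply, Pi.neg_apply, neg_sub_neg,
    max_eq_right (sub_nonneg.mpr hfab)] at hle
  calc ∫⁻ x in Ioc a b, ENNReal.ofReal (-deriv f x)
      = ENNReal.ofReal (∫ x in Ioc a b, (-deriv f) x) :=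
        (ofReal_integral_eq_lintegral_ofReal hint hnonneg).symm
    _ ≤ ENNReal.ofReal (f a - f b) := ENNReal.ofReal_le_ofReal hle

lemma AntitoneOn.setLIntegral_Ici_neg_deriv_le {f : ℝ → ℝ} {a : ℝ}
    (hf : AntitoneOn f (Ici a)) (hf0 : ∀ x ∈ Ici a, 0 ≤ f x) :
    ∫⁻ x in Ici a, ENNReal.ofReal (-deriv f x) ≤ ENNReal.ofReal (f a) := by
  have hunion : ⋃ k : ℕ, Ioc a (a + k) = Ioi a := by
    ext x
    simp only [mem_iUnion, mem_Ioc, mem_Ioi]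
    refine ⟨fun ⟨_, hx, _⟩ => hx, fun hx => ?_⟩
    obtain ⟨k, hk⟩ := exists_nat_ge (x - a)
    exact ⟨k, hx, by linarith⟩
  have hdir : Directed (· ⊆ ·) fun k : ℕ => Ioc a (a + k) :=
    Monotone.directed_le fun k l hkl => Ioc_subset_Ioc_right (by gcongr)
  rw [← setLIntegral_congr Ioi_ae_eq_Ici, ← hunion, setLIntegral_iUnion_of_directed _ hdir]
  refine iSup_le fun k => ?_
  have hk : a ≤ a + k := le_add_of_nonneg_right k.cast_nonneg
  calc ∫⁻ x in Ioc a (a + k), ENNReal.ofReal (-deriv f x)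
      ≤ ENNReal.ofReal (f a - f (a + k)) :=
        (hf.mono Icc_subset_Ici_self).setLIntegral_Ioc_neg_deriv_le hk
    _ ≤ ENNReal.ofReal (f a) := ENNReal.ofReal_le_ofReal (sub_le_self _ (hf0 _ hk))

lemma AntitoneOn.withDensity_neg_deriv_Ici_le {f : ℝ → ℝ} {a r : ℝ}
    (hf : AntitoneOn f (Ici a)) (hf0 : ∀ x ∈ Ici a, 0 ≤ f x) (hr : a ≤ r) :
    (volume.restrict (Ici a)).withDensity (fun s => ENNReal.ofReal (-deriv f s)) (Ici r) ≤
      ENNReal.ofReal (f r) := by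
  have hsub : Ici r ⊆ Ici a := Ici_subset_Ici.mpr hr
  rw [withDensity_apply _ measurableSet_Ici, Measure.restrict_restrict measurableSet_Ici,
    inter_eq_left.mpr hsub]
  exact (hf.mono hsub).setLIntegral_Ici_neg_deriv_le fun x hx => hf0 x (hsub hx)

theorem lintegral_measure_Iic_eq_lintegral_measure_Ici (μ ν : Measure ℝ) [SFinite μ]
    [SFinite ν] : ∫⁻ s, ν (Iic s) ∂μ = ∫⁻ r, μ (Ici r) ∂ν := by
  have hS : MeasurableSet {p : ℝ × ℝ | p.2 ≤ p.1} :=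
    measurableSet_le measurable_snd measurable_fst
  exact (Measure.prod_apply hS).symm.trans (Measure.prod_apply_symm hS)

noncomputable def powerDensity (n : ℕ) (r : ℝ) : ENNReal := ENNReal.ofReal (n * r ^ (n - 1))

noncomputable def powerLaw (n : ℕ) : Measure ℝ :=
  (volume.restrict (Icc 0 1)).withDensity (powerDensity n)

section PowerLaw

variable {n : ℕ}

lemma measurable_powerDensity : Measurable (powerDensity n) :=
  ENNReal.measurable_ofReal.comp ((measurable_id.pow_const _).const_mul _)

lemma setLIntegral_Icc_powerDensity (hn : 1 ≤ n) {c : ℝ} (hc : 0 ≤ c) :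
    ∫⁻ r in Icc 0 c, powerDensity n r = ENNReal.ofReal (c ^ n) := by
  have hcont : Continuous fun r : ℝ => (n : ℝ) * r ^ (n - 1) := by fun_prop
  have hFTC : ∫ r in 0..c, (n : ℝ) * r ^ (n - 1) = c ^ n := by
    rw [intervalIntegral.integral_eq_sub_of_hasDerivAt (fun r _ => hasDerivAt_pow n r)
      (hcont.intervalIntegrable _ _), zero_pow (by omega), sub_zero]
  have hnonneg : ∀ᵐ r ∂volume.restrict (Icc 0 c), 0 ≤ (n : ℝ) * r ^ (n - 1) := by
    filter_upwards [ae_restrict_mem measurableSet_Icc] with r hr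
    have := hr.1
    positivity
  unfold powerDensity
  rw [← ofReal_integral_eq_lintegral_ofReal hcont.integrableOn_Icc hnonneg,
    integral_Icc_eq_integral_Ioc, ← intervalIntegral.integral_of_le hc, hFTC]

lemma isProbabilityMeasure_powerLaw (hn : 1 ≤ n) : IsProbabilityMeasure (powerLaw n) := by
  constructor
  rw [powerLaw, withDensity_apply _ MeasurableSet.univ,
    Measure.restrict_restrict MeasurableSet.univ, univ_inter,
    setLIntegral_Icc_powerDensity hn zero_le_one, one_pow, ENNReal.ofReal_one]

lemma powerLaw_Iic (hn : 1 ≤ n) {c : ℝ} (hc : 0 ≤ c) :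
    powerLaw n (Iic c) = ENNReal.ofReal (min c 1 ^ n) := by
  rw [powerLaw, withDensity_apply _ measurableSet_Iic,
    Measure.restrict_restrict measurableSet_Iic, show Iic c ∩ Icc 0 1 = Icc 0 (min c 1) by
      ext; simp only [mem_inter_iff, mem_Iic, mem_Icc, le_min_iff]; tauto]
  exact setLIntegral_Icc_powerDensity hn (le_min hc zero_le_one)

lemma powerLaw_preimage_mul_Iic (hn : 1 ≤ n) {s : ℝ} (hs : 0 ≤ s) (t : ℝ) :
    ENNReal.ofReal (s ^ n) * powerLaw n ((s * ·) ⁻¹' Iic t) =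
      ∫⁻ r in Icc 0 s ∩ Iic t, powerDensity n r := by
  rcases lt_or_ge t 0 with ht | ht
  · have hmeas : MeasurableSet ((s * ·) ⁻¹' Iic t) :=
      measurableSet_Iic.preimage (measurable_const_mul s)
    have hempty : (s * ·) ⁻¹' Iic t ∩ Icc 0 1 = ∅ := by
      ext u
      simp only [mem_inter_iff, mem_preimage, mem_Iic, mem_Icc, mem_empty_iff_false, iff_false]
      rintro ⟨hu, hu0, -⟩
      nlinarith [mul_nonneg hs hu0]
    have hempty' : Icc 0 s ∩ Iic t = ∅ := by
      ext r
      simp only [mem_inter_iff, mem_Icc, mem_Iic, mem_empty_iff_false, iff_false]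
      rintro ⟨⟨hr, -⟩, hrt⟩
      linarith
    rw [powerLaw, withDensity_apply _ hmeas, Measure.restrict_restrict hmeas, hempty, hempty']
    simp
  rw [show Icc 0 s ∩ Iic t = Icc 0 (min s t) by
      ext; simp only [mem_inter_iff, mem_Icc, mem_Iic, le_min_iff]; tauto,
    setLIntegral_Icc_powerDensity hn (le_min hs ht)]
  rcases hs.eq_or_lt with rfl | hs
  · simp [min_eq_left ht, zero_pow (by omega : n ≠ 0)]
  rw [show (s * ·) ⁻¹' Iic t = Iic (t / s) by ext; simp [le_div_iff₀ hs, mul_comm],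
    powerLaw_Iic hn (div_nonneg ht hs.le), ← ENNReal.ofReal_mul (by positivity), ← mul_pow,
    mul_min_of_nonneg _ _ hs.le, mul_div_cancel₀ _ hs.ne', mul_one, min_comm]

lemma map_mul_prod_powerLaw_Iic (hn : 1 ≤ n) (μ : Measure ℝ) [SFinite μ]
    (hμ : ∀ᵐ s ∂μ, 0 ≤ s) (t : ℝ) :
    ((μ.withDensity fun s => ENNReal.ofReal (s ^ n)).prod (powerLaw n)).map
        (fun p : ℝ × ℝ => p.1 * p.2) (Iic t) =
      (volume.restrict (Ici 0)).withDensity (fun r => powerDensity n r * μ (Ici r)) (Iic t) := by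
  have := isProbabilityMeasure_powerLaw hn
  set νt := (volume.restrict (Ici 0 ∩ Iic t)).withDensity (powerDensity n)
  have hmul : Measurable fun p : ℝ × ℝ => p.1 * p.2 := by fun_prop
  have hS := hmul (measurableSet_Iic (a := t))
  have hanti : Antitone fun r => μ (Ici r) := fun _ _ hab => measure_mono (Ici_subset_Ici.mpr hab)
  have hνt (s : ℝ) : νt (Iic s) = ∫⁻ r in Icc 0 s ∩ Iic t, powerDensity n r := by
    rw [withDensity_apply _ measurableSet_Iic, Measure.restrict_restrict measurableSet_Iic,
      show Iic s ∩ (Ici 0 ∩ Iic t) = Icc 0 s ∩ Iic t by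
        ext; simp only [mem_inter_iff, mem_Icc, mem_Iic, mem_Ici]; tauto]
  calc _ = ∫⁻ s, powerLaw n ((s * ·) ⁻¹' Iic t)
          ∂μ.withDensity fun s => ENNReal.ofReal (s ^ n) := by
        rw [Measure.map_apply hmul measurableSet_Iic, Measure.prod_apply hS]
        rfl
    _ = ∫⁻ s, ENNReal.ofReal (s ^ n) * powerLaw n ((s * ·) ⁻¹' Iic t) ∂μ :=
        lintegral_withDensity_eq_lintegral_mul _ (by fun_prop) (measurable_measure_prodMk_left hS)
    _ = ∫⁻ s, νt (Iic s) ∂μ := lintegral_congr_ae <|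
        hμ.mono fun s hs => (powerLaw_preimage_mul_Iic hn hs t).trans (hνt s).symm
    _ = ∫⁻ r, μ (Ici r) ∂νt := lintegral_measure_Iic_eq_lintegral_measure_Ici μ νt
    _ = _ := by
        rw [lintegral_withDensity_eq_lintegral_mul _ measurable_powerDensity hanti.measurable,
          withDensity_apply _ measurableSet_Iic, Measure.restrict_restrict measurableSet_Iic,
          inter_comm]
        rfl

end PowerLaw

theorem stmt3_general (n : ℕ) (hn : 1 ≤ n) (ρ : ℝ → ℝ) (hρ : ∀ r, 0 ≤ ρ r)
    (hanti : AntitoneOnIci ρ)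
    (ν η τ : Measure ℝ)
    (hν : ν = (volume.restrict (Ici (0:ℝ))).withDensity
      (fun r => ENNReal.ofReal ((n : ℝ) * r ^ (n - 1) * ρ r)))
    (hη : η = (volume.restrict (Ici (0:ℝ))).withDensity
      (fun s => ENNReal.ofReal (-(s ^ n * deriv ρ s))))
    (hτ : τ = (volume.restrict (Icc (0:ℝ) 1)).withDensity
      (fun t => ENNReal.ofReal ((n : ℝ) * t ^ (n - 1))))
    (hνprob : IsProbabilityMeasure ν) (hηprob : IsProbabilityMeasure η) :
    (η.prod τ).map (fun p : ℝ × ℝ => p.1 * p.2) = ν := by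
  set μ := (volume.restrict (Ici 0)).withDensity fun s => ENNReal.ofReal (-deriv ρ s)
  have hρanti : AntitoneOn ρ (Ici 0) := fun x hx _ _ hxy => hanti hx hxy
  have hμ : ∀ᵐ s ∂μ, 0 ≤ s :=
    withDensity_absolutelyContinuous _ _ (ae_restrict_mem measurableSet_Ici)
  have hη' : η = μ.withDensity fun s => ENNReal.ofReal (s ^ n) := by
    rw [hη, ← withDensity_mul _ (by fun_prop) (by fun_prop)]
    refine withDensity_congr_ae ?_
    filter_upwards [ae_restrict_mem measurableSet_Ici] with s hs
    rw [Pi.mul_apply, ← ENNReal.ofReal_mul' (pow_nonneg hs n)]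
    ring_nf
  set ν' := (volume.restrict (Ici 0)).withDensity fun r => powerDensity n r * μ (Ici r)
  have hle : ν' ≤ ν := by
    rw [hν]
    refine withDensity_mono ?_
    filter_upwards [ae_restrict_mem measurableSet_Ici] with r hr
    calc powerDensity n r * μ (Ici r) ≤ powerDensity n r * ENNReal.ofReal (ρ r) := by
          gcongr
          exact hρanti.withDensity_neg_deriv_Ici_le (fun x _ => hρ x) hr
      _ = ENNReal.ofReal (n * r ^ (n - 1) * ρ r) :=
          (ENNReal.ofReal_mul (mul_nonneg n.cast_nonneg (pow_nonneg hr _))).symm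
  have : IsFiniteMeasure ν' := isFiniteMeasure_of_le ν hle
  have : IsProbabilityMeasure τ := hτ ▸ isProbabilityMeasure_powerLaw hn
  have hP : (η.prod τ).map (fun p : ℝ × ℝ => p.1 * p.2) = ν' :=
    Measure.ext_of_Iic _ _ fun t => by
      rw [hη', hτ]
      exact map_mul_prod_powerLaw_Iic hn μ hμ t
  have : IsProbabilityMeasure ν' := hP ▸ Measure.isProbabilityMeasure_map (by fun_prop)
  rw [hP]
  exact Measure.eq_of_le_of_isProbabilityMeasure hle

theorem stmt3 (n : ℕ) (hn : 1 ≤ n) (ρ : ℝ → ℝ) (hρ : ∀ r, 0 ≤ ρ r)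
    (hlc : LogConcaveOnIci ρ) (hanti : AntitoneOnIci ρ)
    (ν η τ : Measure ℝ)
    (hν : ν = (volume.restrict (Ici (0:ℝ))).withDensity
      (fun r => ENNReal.ofReal ((n : ℝ) * r ^ (n - 1) * ρ r)))
    (hη : η = (volume.restrict (Ici (0:ℝ))).withDensity
      (fun s => ENNReal.ofReal (-(s ^ n * deriv ρ s))))
    (hτ : τ = (volume.restrict (Icc (0:ℝ) 1)).withDensity
      (fun t => ENNReal.ofReal ((n : ℝ) * t ^ (n - 1))))
    (hνprob : IsProbabilityMeasure ν) (hηprob : IsProbabilityMeasure η) :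
    (η.prod τ).map (fun p : ℝ × ℝ => p.1 * p.2) = ν :=
  stmt3_general n hn ρ hρ hanti ν η τ hν hη hτ hνprob hηprob
end
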